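/- Let φ: X → Z be a toric F-fibration with dim F = d, dim Z = m, ray generators v_1, …, v_r for F and e_1, …, e_t for Z, toric divisors F̃_i on F with relations F̃_i = Σ_{j=d+1}^r δ_i^j F̃_j for 1 ≤ i ≤ d, toric divisors Z̃_i on Z with relations Z̃_i = Σ_{j=m+1}^t α_i^j Z̃_j for 1 ≤ i ≤ m, and fibration invariants γ_k^j ∈ ℤ determining the lifted ray generators ē_j = (Σ_{k=1}^d γ_k^j v_k, e_j) for m+1 ≤ j ≤ t, so that Pic(X) is freely generated by the toric divisors F_{d+1}, …, F_r, Z_{m+1}, …, Z_t. If r = (a_1, …, a_r, b_1, …, b_t) is a representation of the line bundle D = O_X(Σ_{i=d+1}^r α_i F_i + Σ_{j=m+1}^t β_j Z_j) on X, then r = (r_1, r_2) where r_1 = (a_1, …, a_r) is a representation of O_F(Σ_{i=d+1}^r α_i F̃_i) on F and r_2 = (b_1, …, b_t) is a representation of O_Z(Σ_{j=m+1}^t β_j Z̃_j + D^γ_{a_1,…,a_r}) on Z, where D^γ_{a_1,…,a_r} = (Σ_{i=1}^d a_i γ_i^{m+1}) Z̃_{m+1} + … + (Σ_{i=1}^d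 a_i γ_i^t) Z̃_t. -/
import Mathlib


/-!
Statement 8 (Costa–Di Rocco–Miró-Roig, "Derived category of toric fibrations", Lemma
`key2`):

Let `φ : X → Z` be a toric `F`-fibration with `dim F = d`, `dim Z = m`, toric divisors
`F̃_i` on `F` (with relations `F̃_i = Σ_{j ≥ d} δᵢʲ F̃_j` for `i < d`), toric divisors `Z̃_i`
on `Z` (with relations `Z̃_i = Σ_{j ≥ m} αᵢʲ Z̃_j` for `i < m`), and fibration invariants
`γᵢʲ ∈ ℤ`, so that `Pic X` is freely generated by the toric divisors
`F_d, …, F_{r-1}, Z_m, …, Z_{t-1}` subject to the relations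
`Z_i = Σ_{k ≥ m} αᵢᵏ Z_k` (`i < m`) and `F_i = Σ_{j ≥ d} δᵢʲ F_j − Σ_{j ≥ m} γᵢʲ Z_j`
(`i < d`).  If `(a_1, …, a_r, b_1, …, b_t)` is a representation of the line bundle
`O_X(Σ_{i ≥ d} αᵢ F_i + Σ_{j ≥ m} βⱼ Z_j)`, then `(a_1, …, a_r)` is a representation of
`O_F(Σ_{i ≥ d} αᵢ F̃_i)` and `(b_1, …, b_t)` is a representation of
`O_Z(Σ_{j ≥ m} βⱼ Z̃_j + D^γ_{a})` where `D^γ_a = Σ_{j ≥ m} (Σ_{i < d} aᵢ γᵢʲ) Z̃_j`.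

A vector `r` represents a line bundle `L` if `L = Σ rᵢ Tᵢ` in the Picard group, where the
`Tᵢ` are the toric divisor classes; Picard groups are written additively.  Indices are
shifted to start at `0` ("`1 ≤ i ≤ d`" becomes "`i < d`", etc.).
-/

open Finset

private lemma sum_expand {ι M : Type*} [Fintype ι] [AddCommGroup M]
    (p : ι → Prop) [DecidablePred p] (v w : ι → M) (c : ι → ℤ) (δ : ι → ι → ℤ)
    (h : ∀ i, ¬ p i → v i = (∑ j ∈ univ.filter p, δ i j • v j) + w i) :
    ∑ i, c i • v i
      = ∑ j ∈ univ.filter p,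
          (c j + ∑ i ∈ univ.filter (fun i => ¬ p i), c i * δ i j) • v j
        + ∑ i ∈ univ.filter (fun i => ¬ p i), c i • w i := by
  rw [← sum_filter_add_sum_filter_not univ p (fun i => c i • v i)]
  have h2 : ∑ i ∈ univ.filter (fun i => ¬ p i), c i • v i
      = ∑ j ∈ univ.filter p, (∑ i ∈ univ.filter (fun i => ¬ p i), c i * δ i j) • v j
        + ∑ i ∈ univ.filter (fun i => ¬ p i), c i • w i := by
    calc ∑ i ∈ univ.filter (fun i => ¬ p i), c i • v i
        = ∑ i ∈ univ.filter (fun i => ¬ p i),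
            (∑ j ∈ univ.filter p, (c i * δ i j) • v j + c i • w i) := by
          refine sum_congr rfl fun i hi => ?_
          rw [h i (by simpa using hi), smul_add, smul_sum]
          simp [smul_smul]
      _ = ∑ i ∈ univ.filter (fun i => ¬ p i), ∑ j ∈ univ.filter p, (c i * δ i j) • v j
            + ∑ i ∈ univ.filter (fun i => ¬ p i), c i • w i := by
          rw [sum_add_distrib]
      _ = ∑ j ∈ univ.filter p, (∑ i ∈ univ.filter (fun i => ¬ p i), c i * δ i j) • v j
            + ∑ i ∈ univ.filter (fun i => ¬ p i), c i • w i := by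
          rw [sum_comm]
          congr 1
          refine sum_congr rfl fun j _ => ?_
          rw [sum_smul]
  rw [h2]
  have h3 : ∑ j ∈ univ.filter p,
      (c j + ∑ i ∈ univ.filter (fun i => ¬ p i), c i * δ i j) • v j
      = ∑ x ∈ univ.filter p, c x • v x
        + ∑ j ∈ univ.filter p, (∑ i ∈ univ.filter (fun i => ¬ p i), c i * δ i j) • v j := by
    rw [← sum_add_distrib]
    exact sum_congr rfl fun j _ => by rw [add_smul]
  rw [h3]
  abel

private lemma swap_smul {ι κ M : Type*} [AddCommGroup M]
    (s : Finset ι) (u : Finset κ) (c : ι → ℤ) (γ : ι → κ → ℤ) (v : κ → M) :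
    ∑ i ∈ s, c i • ∑ j ∈ u, γ i j • v j = ∑ j ∈ u, (∑ i ∈ s, c i * γ i j) • v j := by
  simp_rw [smul_sum, smul_smul]
  rw [sum_comm]
  exact sum_congr rfl fun j _ => (sum_smul).symm


/-- **Lemma (key2).** -/
theorem representation_decomposes_along_fibration
    (d m r t : ℕ) (hd : d ≤ r) (hm : m ≤ t)
    (PicX PicF PicZ : Type)
    [AddCommGroup PicX] [AddCommGroup PicF] [AddCommGroup PicZ]
    -- toric divisor classes on `X`, `F` and `Z`
    (FX : Fin r → PicX) (ZX : Fin t → PicX)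
    (Ftil : Fin r → PicF) (Ztil : Fin t → PicZ)
    -- the structure constants of the fibration
    (δ : Fin r → Fin r → ℤ) (α : Fin t → Fin t → ℤ) (γ : Fin r → Fin t → ℤ)
    -- the relations (pic1) in `Pic F`
    (hpic1 : ∀ i : Fin r, (i : ℕ) < d →
      Ftil i = ∑ j ∈ univ.filter (fun j : Fin r => d ≤ (j : ℕ)), δ i j • Ftil j)
    -- the relations (pic2) in `Pic Z`
    (hpic2 : ∀ i : Fin t, (i : ℕ) < m →
      Ztil i = ∑ j ∈ univ.filter (fun j : Fin t => m ≤ (j : ℕ)), α i j • Ztil j)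
    -- the relations (picX) in `Pic X`
    (hpicXZ : ∀ i : Fin t, (i : ℕ) < m →
      ZX i = ∑ k ∈ univ.filter (fun k : Fin t => m ≤ (k : ℕ)), α i k • ZX k)
    (hpicXF : ∀ i : Fin r, (i : ℕ) < d →
      FX i = ∑ j ∈ univ.filter (fun j : Fin r => d ≤ (j : ℕ)), δ i j • FX j
        - ∑ j ∈ univ.filter (fun j : Fin t => m ≤ (j : ℕ)), γ i j • ZX j)
    -- `F_d, …, F_{r-1}, Z_m, …, Z_{t-1}` freely generate `Pic X`
    (hfree : LinearIndependent ℤ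
      (Sum.elim (fun i : {i : Fin r // d ≤ (i : ℕ)} => FX i)
        (fun j : {j : Fin t // m ≤ (j : ℕ)} => ZX j)))
    -- `(a, b)` is a representation of `O_X(Σ_{i ≥ d} αᵢ F_i + Σ_{j ≥ m} βⱼ Z_j)`
    (a : Fin r → ℤ) (b : Fin t → ℤ) (A : Fin r → ℤ) (B : Fin t → ℤ)
    (hrep : ∑ i : Fin r, a i • FX i + ∑ j : Fin t, b j • ZX j
      = ∑ i ∈ univ.filter (fun i : Fin r => d ≤ (i : ℕ)), A i • FX i
        + ∑ j ∈ univ.filter (fun j : Fin t => m ≤ (j : ℕ)), B j • ZX j) :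
    -- `a` is a representation of `O_F(Σ_{i ≥ d} αᵢ F̃_i)` …
    (∑ i : Fin r, a i • Ftil i
      = ∑ i ∈ univ.filter (fun i : Fin r => d ≤ (i : ℕ)), A i • Ftil i)
    -- … and `b` is a representation of `O_Z(Σ_{j ≥ m} βⱼ Z̃_j + D^γ_a)`
    ∧ (∑ j : Fin t, b j • Ztil j
      = ∑ j ∈ univ.filter (fun j : Fin t => m ≤ (j : ℕ)), B j • Ztil j
        + ∑ j ∈ univ.filter (fun j : Fin t => m ≤ (j : ℕ)),
            (∑ i ∈ univ.filter (fun i : Fin r => (i : ℕ) < d), a i * γ i j) • Ztil j) := by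
  classical
  have hFc : (univ.filter (fun i : Fin r => ¬ d ≤ (i : ℕ)))
      = univ.filter (fun i : Fin r => (i : ℕ) < d) := by
    apply filter_congr; intro i _; simp [Nat.not_le]
  have hZc : (univ.filter (fun i : Fin t => ¬ m ≤ (i : ℕ)))
      = univ.filter (fun i : Fin t => (i : ℕ) < m) := by
    apply filter_congr; intro i _; simp [Nat.not_le]
  set cA : Fin r → ℤ := fun j =>
    a j + ∑ i ∈ univ.filter (fun i : Fin r => (i : ℕ) < d), a i * δ i j with hcA
  set cB : Fin t → ℤ := fun j =>
    b j + ∑ i ∈ univ.filter (fun i : Fin t => (i : ℕ) < m), b i * α i j with hcB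
  set G : Fin t → ℤ := fun j =>
    ∑ i ∈ univ.filter (fun i : Fin r => (i : ℕ) < d), a i * γ i j with hG
  -- expand the X-side sums using the relations
  have eFX : ∑ i : Fin r, a i • FX i
      = ∑ j ∈ univ.filter (fun j : Fin r => d ≤ (j : ℕ)), cA j • FX j
        - ∑ j ∈ univ.filter (fun j : Fin t => m ≤ (j : ℕ)), G j • ZX j := by
    have h := sum_expand (fun i : Fin r => d ≤ (i : ℕ)) FX
      (fun i => -(∑ j ∈ univ.filter (fun j : Fin t => m ≤ (j : ℕ)), γ i j • ZX j)) a δ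
      (fun i hi => by
        rw [hpicXF i (Nat.not_le.mp hi), sub_eq_add_neg])
    rw [h, hFc]
    have h2 : ∑ i ∈ univ.filter (fun i : Fin r => (i : ℕ) < d),
        a i • (-(∑ j ∈ univ.filter (fun j : Fin t => m ≤ (j : ℕ)), γ i j • ZX j))
        = -(∑ j ∈ univ.filter (fun j : Fin t => m ≤ (j : ℕ)), G j • ZX j) := by
      calc ∑ i ∈ univ.filter (fun i : Fin r => (i : ℕ) < d),
            a i • (-(∑ j ∈ univ.filter (fun j : Fin t => m ≤ (j : ℕ)), γ i j • ZX j))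
          = -∑ i ∈ univ.filter (fun i : Fin r => (i : ℕ) < d),
              a i • (∑ j ∈ univ.filter (fun j : Fin t => m ≤ (j : ℕ)), γ i j • ZX j) := by
            rw [← sum_neg_distrib]
            exact sum_congr rfl fun i _ => smul_neg _ _
        _ = -(∑ j ∈ univ.filter (fun j : Fin t => m ≤ (j : ℕ)), G j • ZX j) := by
            rw [swap_smul]
    rw [h2, ← sub_eq_add_neg]
  have eZX : ∑ j : Fin t, b j • ZX j
      = ∑ j ∈ univ.filter (fun j : Fin t => m ≤ (j : ℕ)), cB j • ZX j := by
    have h := sum_expand (fun i : Fin t => m ≤ (i : ℕ)) ZX (fun _ => (0 : PicX)) b α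
      (fun i hi => by rw [hpicXZ i (Nat.not_le.mp hi), add_zero])
    simpa [hZc] using h
  -- the difference of the two representations vanishes
  have key : ∑ j ∈ univ.filter (fun j : Fin r => d ≤ (j : ℕ)), (cA j - A j) • FX j
      + ∑ j ∈ univ.filter (fun j : Fin t => m ≤ (j : ℕ)), (cB j - G j - B j) • ZX j
      = 0 := by
    rw [eFX, eZX] at hrep
    simp only [sub_smul, sum_sub_distrib]
    rw [← sub_eq_zero] at hrep
    rw [← hrep]
    abel
  -- apply linear independence
  set g : {i : Fin r // d ≤ (i : ℕ)} ⊕ {j : Fin t // m ≤ (j : ℕ)} → ℤ :=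
    Sum.elim (fun i => cA i - A i) (fun j => cB j - G j - B j) with hg
  have hzero := Fintype.linearIndependent_iff.mp hfree g ?side
  case side =>
    rw [Fintype.sum_sum_type]
    simp only [hg, Sum.elim_inl, Sum.elim_inr]
    rw [← Finset.sum_subtype (univ.filter (fun i : Fin r => d ≤ (i : ℕ)))
        (fun x => by simp) (fun j => (cA j - A j) • FX j),
      ← Finset.sum_subtype (univ.filter (fun j : Fin t => m ≤ (j : ℕ)))
        (fun x => by simp) (fun j => (cB j - G j - B j) • ZX j)]
    exact key
  have hA : ∀ j : Fin r, d ≤ (j : ℕ) → cA j = A j := fun j hj =>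
    sub_eq_zero.mp (hzero (Sum.inl ⟨j, hj⟩))
  have hB : ∀ j : Fin t, m ≤ (j : ℕ) → cB j = B j + G j := fun j hj => by
    have := hzero (Sum.inr ⟨j, hj⟩)
    simp only [hg, Sum.elim_inr] at this
    linarith
  constructor
  · have h := sum_expand (fun i : Fin r => d ≤ (i : ℕ)) Ftil (fun _ => (0 : PicF)) a δ
      (fun i hi => by rw [hpic1 i (Nat.not_le.mp hi), add_zero])
    rw [show (∑ i : Fin r, a i • Ftil i
        = ∑ j ∈ univ.filter (fun j : Fin r => d ≤ (j : ℕ)), cA j • Ftil j) by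
      simpa [hFc] using h]
    exact sum_congr rfl fun j hj => by rw [hA j (by simpa using hj)]
  · have h := sum_expand (fun i : Fin t => m ≤ (i : ℕ)) Ztil (fun _ => (0 : PicZ)) b α
      (fun i hi => by rw [hpic2 i (Nat.not_le.mp hi), add_zero])
    rw [show (∑ j : Fin t, b j • Ztil j
        = ∑ j ∈ univ.filter (fun j : Fin t => m ≤ (j : ℕ)), cB j • Ztil j) by
      simpa [hZc] using h]
    rw [← sum_add_distrib]
    exact sum_congr rfl fun j hj => by
      rw [hB j (by simpa using hj), add_smul]
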